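/- For any finite simple graph H of order n ≥ 2, adim_2(K_1 + H) ≤ adim_2(H) + 2. -/

import Mathlib

open Finset

namespace AdjDim

noncomputable section
open Classical

variable {V W : Type*}

/-- Truncated distance `d_{G,2}(x,y) = min(d_G(x,y), 2)`:
`0` if `x = y`, `1` if `x` and `y` are adjacent, and `2` otherwise. -/
def d2 (G : SimpleGraph V) (x y : V) : ℕ :=
  if x = y then 0 else if G.Adj x y then 1 else 2

/-- `S` is a `k`-adjacency generator for `G`: every pair of distinct vertices is
distinguished (w.r.t. `d_{G,2}`) by at least `k` vertices of `S`. -/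
def IsKAdjGen (G : SimpleGraph V) [Fintype V] (k : ℕ) (S : Finset V) : Prop :=
  ∀ x y : V, x ≠ y → k ≤ (S.filter (fun w => d2 G x w ≠ d2 G y w)).card

/-- The `k`-adjacency dimension of `G`: the minimum cardinality of a
`k`-adjacency generator. -/
def adim (G : SimpleGraph V) [Fintype V] (k : ℕ) : ℕ :=
  sInf {n | ∃ S : Finset V, IsKAdjGen G k S ∧ S.card = n}

/-- `B` is a `k`-adjacency basis of `G`: a `k`-adjacency generator of minimum
cardinality. -/
def IsKAdjBasis (G : SimpleGraph V) [Fintype V] (k : ℕ) (B : Finset V) : Prop :=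
  IsKAdjGen G k B ∧ B.card = adim G k

/-- `G` is `k`-adjacency dimensional: `k` is the largest integer for which a
`k`-adjacency generator exists. -/
def IsKAdjDimensional (G : SimpleGraph V) [Fintype V] (k : ℕ) : Prop :=
  (∃ S : Finset V, IsKAdjGen G k S) ∧
    ∀ k' : ℕ, k < k' → ¬ ∃ S : Finset V, IsKAdjGen G k' S

/-- `C_G(x,y)`: the set of vertices distinguishing `x` and `y` w.r.t. `d_{G,2}`. -/
def CSet (G : SimpleGraph V) [Fintype V] (x y : V) : Finset V :=
  univ.filter (fun z => d2 G x z ≠ d2 G y z)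

/-- `C(G) = min_{x ≠ y} |C_G(x,y)|`. -/
def Cmin (G : SimpleGraph V) [Fintype V] : ℕ :=
  sInf {m | ∃ x y : V, x ≠ y ∧ (CSet G x y).card = m}

/-- `C_k(G)`: the union of the sets `C_G(x,y)` over pairs of distinct vertices
with `|C_G(x,y)| = k`. -/
def Ck (G : SimpleGraph V) [Fintype V] (k : ℕ) : Finset V :=
  univ.filter (fun z => ∃ x y : V, x ≠ y ∧ (CSet G x y).card = k ∧ z ∈ CSet G x y)

/-- Two distinct vertices `x, y` are twins: every other vertex is at the same
truncated distance from both. -/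
def Twins (G : SimpleGraph V) (x y : V) : Prop :=
  x ≠ y ∧ ∀ z : V, z ≠ x → z ≠ y → d2 G x z = d2 G y z

/-- The join `G + H` of two vertex-disjoint graphs. -/
def join (G : SimpleGraph V) (H : SimpleGraph W) : SimpleGraph (V ⊕ W) where
  Adj x y :=
    match x, y with
    | Sum.inl a, Sum.inl b => G.Adj a b
    | Sum.inr a, Sum.inr b => H.Adj a b
    | Sum.inl _, Sum.inr _ => True
    | Sum.inr _, Sum.inl _ => True
  symm := by
    constructor
    rintro (a | a) (b | b) h
    · exact G.adj_symm h
    · trivial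
    · trivial
    · exact H.adj_symm h
  loopless := by
    constructor
    rintro (a | a) h
    · exact G.irrefl h
    · exact H.irrefl h

/-- `K_1 + H`: the join of a one-vertex graph with `H`, i.e. `H` together with a
new universal vertex. -/
def K1join (H : SimpleGraph W) : SimpleGraph (Unit ⊕ W) :=
  join (⊥ : SimpleGraph Unit) H

/- Let `B` be a 2-adjacency basis of `H` and `c` the universal vertex. Pairs inside `H`
are still separated by `B`, and `c` separates itself from every vertex of `H`. A second separator
for the pair `(c, b)` is a vertex `w` of `H` with `d(b, w) ≠ 1`, i.e. `w = b` or `w` not adjacent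
to `b`; one exists in `B` unless `b ∉ B` is adjacent to all of `B`. Two such vertices would not be
separated by `B` at all, so adding at most one vertex of `H` and `c` to `B` gives a generator. -/

lemma d2_self (G : SimpleGraph V) (x : V) : d2 G x x = 0 := if_pos rfl

lemma d2_comm (G : SimpleGraph V) (x y : V) : d2 G x y = d2 G y x := by
  by_cases h : x = y
  · rw [h]
  · simp only [d2, if_neg h, if_neg (Ne.symm h), G.adj_comm]

lemma d2_eq_zero_iff (G : SimpleGraph V) (x y : V) : d2 G x y = 0 ↔ x = y := by
  unfold d2
  split_ifs <;> simpa

lemma d2_eq_one_iff (G : SimpleGraph V) (x y : V) : d2 G x y = 1 ↔ G.Adj x y := by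
  unfold d2
  split_ifs with hxy hadj
  · simp [hxy]
  · simpa using hadj
  · simpa using hadj

lemma d2_K1join_inl_inr (H : SimpleGraph W) (u : Unit) (b : W) :
    d2 (K1join H) (Sum.inl u) (Sum.inr b) = 1 :=
  (d2_eq_one_iff _ _ _).2 trivial

lemma d2_K1join_inr_inr (H : SimpleGraph W) (a b : W) :
    d2 (K1join H) (Sum.inr a) (Sum.inr b) = d2 H a b := by
  simp only [d2, Sum.inr.injEq]
  rfl

section Generators

variable [Fintype V] {G : SimpleGraph V} {k : ℕ}

lemma IsKAdjGen.mono {S T : Finset V} (hS : IsKAdjGen G k S) (hST : S ⊆ T) :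
    IsKAdjGen G k T :=
  fun x y hxy => (hS x y hxy).trans (card_le_card (filter_subset_filter _ hST))

lemma isKAdjGen_two_univ (G : SimpleGraph V) : IsKAdjGen G 2 univ := by
  intro x y hxy
  refine one_lt_card.2 ⟨x, mem_filter.2 ⟨mem_univ _, ?_⟩, y, mem_filter.2 ⟨mem_univ _, ?_⟩, hxy⟩
  · rw [d2_self, ne_comm, Ne, d2_eq_zero_iff]
    exact hxy.symm
  · rw [d2_self, Ne, d2_eq_zero_iff]
    exact hxy

lemma adim_le_card {S : Finset V} (hS : IsKAdjGen G k S) : adim G k ≤ S.card :=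
  Nat.sInf_le ⟨S, hS, rfl⟩

lemma exists_isKAdjBasis_two (G : SimpleGraph V) : ∃ B, IsKAdjBasis G 2 B :=
  Nat.sInf_mem (⟨_, univ, isKAdjGen_two_univ G, rfl⟩ :
    {n | ∃ S : Finset V, IsKAdjGen G 2 S ∧ S.card = n}.Nonempty)

def outsideCommonNeighbors (G : SimpleGraph V) (B : Finset V) : Finset V :=
  univ.filter fun b => b ∉ B ∧ ∀ w ∈ B, G.Adj b w

lemma IsKAdjGen.card_outsideCommonNeighbors_le_one {B : Finset V} (hk : 1 ≤ k)
    (hB : IsKAdjGen G k B) : (outsideCommonNeighbors G B).card ≤ 1 := by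
  refine card_le_one.2 fun a ha b hb => by_contra fun hab => ?_
  simp only [outsideCommonNeighbors, mem_filter, mem_univ, true_and] at ha hb
  have hempty : B.filter (fun w => d2 G a w ≠ d2 G b w) = ∅ := by
    refine filter_eq_empty_iff.2 fun w hw => not_not.2 ?_
    rw [(d2_eq_one_iff G a w).2 (ha.2 w hw), (d2_eq_one_iff G b w).2 (hb.2 w hw)]
  have := hB a b hab
  rw [hempty, card_empty] at this
  omega

end Generators

section K1join

variable {H : SimpleGraph W}

lemma card_filter_map_inr_K1join (B : Finset W) (a b : W) :
    ((B.map Function.Embedding.inr).filter fun w =>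
        d2 (K1join H) (Sum.inr a) w ≠ d2 (K1join H) (Sum.inr b) w).card =
      (B.filter fun w => d2 H a w ≠ d2 H b w).card := by
  rw [filter_map, card_map]
  simp only [Function.comp_def, Function.Embedding.inr_apply, d2_K1join_inr_inr]

lemma two_le_card_filter_K1join_inl_inr {S : Finset (Unit ⊕ W)} (u : Unit) {b w : W}
    (hu : Sum.inl u ∈ S) (hw : Sum.inr w ∈ S) (hbw : w = b ∨ ¬ H.Adj b w) :
    2 ≤ (S.filter fun z => d2 (K1join H) (Sum.inl u) z ≠ d2 (K1join H) (Sum.inr b) z).card := by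
  refine one_lt_card.2 ⟨_, mem_filter.2 ⟨hu, ?_⟩, _, mem_filter.2 ⟨hw, ?_⟩, Sum.inl_ne_inr⟩
  · rw [d2_self, d2_comm, d2_K1join_inl_inr]
    omega
  · rw [d2_K1join_inl_inr, d2_K1join_inr_inr, Ne, eq_comm, d2_eq_one_iff]
    rcases hbw with rfl | hbw
    · exact H.irrefl
    · exact hbw

def K1joinGenerator [Fintype W] (H : SimpleGraph W) (B : Finset W) : Finset (Unit ⊕ W) :=
  insert (Sum.inl ()) ((B ∪ outsideCommonNeighbors H B).map Function.Embedding.inr)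

lemma card_K1joinGenerator_le [Fintype W] (B : Finset W) :
    (K1joinGenerator H B).card ≤ B.card + (outsideCommonNeighbors H B).card + 1 :=
  calc (K1joinGenerator H B).card
      ≤ ((B ∪ outsideCommonNeighbors H B).map Function.Embedding.inr).card + 1 :=
        card_insert_le _ _
    _ ≤ B.card + (outsideCommonNeighbors H B).card + 1 := by
        rw [card_map]
        exact Nat.add_le_add_right (card_union_le _ _) 1

lemma IsKAdjGen.K1joinGenerator [Fintype W] {B : Finset W} (hB : IsKAdjGen H 2 B) :
    IsKAdjGen (K1join H) 2 (K1joinGenerator H B) := by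
  set S := AdjDim.K1joinGenerator H B
  have hinl : (Sum.inl () : Unit ⊕ W) ∈ S := mem_insert_self _ _
  have hinr : ∀ w ∈ B ∪ outsideCommonNeighbors H B, Sum.inr w ∈ S :=
    fun w hw => mem_insert_of_mem (mem_map_of_mem _ hw)
  have hmixed (b : W) :
      2 ≤ (S.filter fun z => d2 (K1join H) (Sum.inl ()) z ≠ d2 (K1join H) (Sum.inr b) z).card := by
    by_cases hb : b ∈ B ∪ outsideCommonNeighbors H B
    · exact two_le_card_filter_K1join_inl_inr () hinl (hinr b hb) (Or.inl rfl)
    · obtain ⟨hbB, hbN⟩ : b ∉ B ∧ (b ∉ B → ∃ w ∈ B, ¬ H.Adj b w) := by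
        simpa [outsideCommonNeighbors, not_or] using hb
      obtain ⟨w, hwB, hbw⟩ := hbN hbB
      exact two_le_card_filter_K1join_inl_inr () hinl (hinr w (mem_union_left _ hwB)) (Or.inr hbw)
  rintro (⟨⟩ | a) (⟨⟩ | b) hab
  · exact absurd rfl hab
  · exact hmixed b
  · simpa only [ne_comm] using hmixed a
  · calc 2 ≤ _ := (hB.mono subset_union_left) a b (fun h => hab (congrArg _ h))
      _ = _ := (card_filter_map_inr_K1join _ a b).symm
      _ ≤ _ := card_le_card (filter_subset_filter _ (subset_insert _ _))

end K1join

theorem adim_two_K1join_le_general [Fintype W] (H : SimpleGraph W) :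
    adim (K1join H) 2 ≤ adim H 2 + 2 := by
  obtain ⟨B, hB, hBcard⟩ := exists_isKAdjBasis_two H
  have hout := hB.card_outsideCommonNeighbors_le_one one_le_two
  calc adim (K1join H) 2 ≤ (K1joinGenerator H B).card := adim_le_card hB.K1joinGenerator
    _ ≤ B.card + (outsideCommonNeighbors H B).card + 1 := card_K1joinGenerator_le B
    _ ≤ adim H 2 + 2 := by omega

/-- Theorem 4.19: for any graph `H` of order `n ≥ 2`,
`adim_2(K₁ + H) ≤ adim_2(H) + 2`. -/
theorem adim_two_K1join_le [Fintype W] (H : SimpleGraph W)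
    (h : 2 ≤ Fintype.card W) :
    adim (K1join H) 2 ≤ adim H 2 + 2 :=
  adim_two_K1join_le_general H

end
end AdjDim
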